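/- Let κ be a strongly inaccessible cardinal and ⟨A_α : α < κ⟩ a potential ◊_κ sequence, and let F be a filter on the diamond killing poset Q (F is nonempty, upward closed, and any two members of F have a common lower bound in F) such that F ∩ D_γ ≠ ∅ for every γ < κ. Then, setting S = ⋃{s : (s,c) ∈ F} and C = ⋃{c : (s,c) ∈ F}, the set C is club in κ (unbounded and contains all its limit points below κ) and S ∩ α ≠ A_α for every strongly inaccessible α ∈ C; in particular, the set {α < κ : α is strongly inaccessible and S ∩ α = A_α} is not stationary in κ. -/

import Mathlib

open Set

/-- `C` is unbounded in `κ`. -/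
def IsUnboundedIn (κ : Ordinal.{0}) (C : Set Ordinal.{0}) : Prop :=
  ∀ α < κ, ∃ β ∈ C, α < β

/-- `C` contains all of its limit points below `κ`. -/
def IsClosedIn (κ : Ordinal.{0}) (C : Set Ordinal.{0}) : Prop :=
  ∀ α < κ, α ≠ 0 → (∀ β < α, ∃ γ ∈ C, β < γ ∧ γ < α) → α ∈ C

/-- `C ⊆ κ` is club in `κ`: unbounded and closed. -/
def IsClubIn (κ : Ordinal.{0}) (C : Set Ordinal.{0}) : Prop :=
  C ⊆ Set.Iio κ ∧ IsUnboundedIn κ C ∧ IsClosedIn κ C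

/-- `S` is stationary in `κ`: it meets every club subset of `κ`. -/
def IsStationaryIn (κ : Ordinal.{0}) (S : Set Ordinal.{0}) : Prop :=
  ∀ C, IsClubIn κ C → (S ∩ C).Nonempty

/-- The ordinal `α` is an infinite regular cardinal. -/
def IsRegOrd (α : Ordinal.{0}) : Prop :=
  ∃ c : Cardinal.{0}, c.IsRegular ∧ α = c.ord

/-- The ordinal `α` is a strongly inaccessible cardinal. -/
def IsInaccOrd (α : Ordinal.{0}) : Prop :=
  ∃ c : Cardinal.{0}, c.IsInaccessible ∧ α = c.ord

/-- `c` is a closed bounded subset of `κ`. -/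
def IsClosedBddIn (κ : Ordinal.{0}) (c : Set Ordinal.{0}) : Prop :=
  c ⊆ Set.Iio κ ∧ (∃ β, β < κ ∧ ∀ α ∈ c, α ≤ β) ∧ IsClosedIn κ c

/-- `p = (s, c)` is a condition of the diamond killing poset for the potential
`◊_κ` sequence `A`: `c` is a closed bounded subset of `κ`, `s ⊆ sup c`, and
`s ∩ α ≠ A α` for every strongly inaccessible `α ∈ c`. -/
def IsCond (κ : Ordinal.{0}) (A : Ordinal.{0} → Set Ordinal.{0})
    (p : Set Ordinal.{0} × Set Ordinal.{0}) : Prop :=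
  IsClosedBddIn κ p.2 ∧ p.1 ⊆ Set.Iio (sSup p.2) ∧
    ∀ α ∈ p.2, IsInaccOrd α → p.1 ∩ Set.Iio α ≠ A α

/-- The ordering of the diamond killing poset: `(s', c') ≤ (s, c)` iff
`s' ∩ sup c = s` and `c' ∩ (sup c + 1) = c`. -/
def CondLE (p q : Set Ordinal.{0} × Set Ordinal.{0}) : Prop :=
  p.1 ∩ Set.Iio (sSup q.2) = q.1 ∧ p.2 ∩ Set.Iic (sSup q.2) = q.2

/-- `D_γ`: the set of conditions `(s, c)` with `c \ γ ≠ ∅`. -/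
def DSet (κ : Ordinal.{0}) (A : Ordinal.{0} → Set Ordinal.{0}) (γ : Ordinal.{0}) :
    Set (Set Ordinal.{0} × Set Ordinal.{0}) :=
  {p | IsCond κ A p ∧ (p.2 \ Set.Iio γ).Nonempty}

/-!
Two conditions of a filter have a common extension, and an extension of `(s, c)` restricts to
`(s, c)` below `sup c`. So for every `(s, c) ∈ F` the generic pair `(S, C)` satisfies
`S ∩ sup c = s` and `C ∩ (sup c + 1) = c`. An inaccessible `α ∈ C` lies in some `c` with
`(s, c) ∈ F`, and then `S ∩ α = s ∩ α ≠ A_α`. A limit `α < κ` of points of `C` lies below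
`sup c` for a condition `(s, c) ∈ F ∩ D_α`, so it is a limit of points of the closed set `c`.
-/

open Function

lemma IsCond.bddAbove {κ : Ordinal.{0}} {A : Ordinal.{0} → Set Ordinal.{0}}
    {p : Set Ordinal.{0} × Set Ordinal.{0}} (h : IsCond κ A p) : BddAbove p.2 :=
  let ⟨β, _, hβ⟩ := h.1.2.1
  ⟨β, hβ⟩

lemma CondLE.fst_subset {p q : Set Ordinal.{0} × Set Ordinal.{0}} (h : CondLE p q) :
    q.1 ⊆ p.1 :=
  h.1 ▸ inter_subset_left

lemma CondLE.snd_subset {p q : Set Ordinal.{0} × Set Ordinal.{0}} (h : CondLE p q) :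
    q.2 ⊆ p.2 :=
  h.2 ▸ inter_subset_left

lemma not_isStationaryIn_of_disjoint {κ : Ordinal.{0}} {S C : Set Ordinal.{0}}
    (hC : IsClubIn κ C) (hSC : Disjoint S C) : ¬ IsStationaryIn κ S :=
  fun hS => (hS C hC).ne_empty hSC.inter_eq

section Filter

variable {κ : Ordinal.{0}} {A : Ordinal.{0} → Set Ordinal.{0}}
  {F : Set (Set Ordinal.{0} × Set Ordinal.{0})} {p : Set Ordinal.{0} × Set Ordinal.{0}}

lemma iUnion_fst_inter_Iio_eq (hcond : ∀ p ∈ F, IsCond κ A p)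
    (hdir : DirectedOn (swap CondLE) F) (hp : p ∈ F) :
    (⋃ q ∈ F, q.1) ∩ Iio (sSup p.2) = p.1 := by
  refine Subset.antisymm ?_ fun δ hδ => ⟨mem_biUnion hp hδ, (hcond p hp).2.1 hδ⟩
  rintro δ ⟨hδS, hδp⟩
  obtain ⟨q, hq, hδq⟩ := mem_iUnion₂.1 hδS
  obtain ⟨r, -, hrp, hrq⟩ := hdir p hp q hq
  exact hrp.1 ▸ ⟨hrq.fst_subset hδq, hδp⟩

lemma iUnion_snd_inter_Iic_eq (hcond : ∀ p ∈ F, IsCond κ A p)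
    (hdir : DirectedOn (swap CondLE) F) (hp : p ∈ F) :
    (⋃ q ∈ F, q.2) ∩ Iic (sSup p.2) = p.2 := by
  refine Subset.antisymm ?_ fun δ hδ =>
    ⟨mem_biUnion hp hδ, le_csSup (hcond p hp).bddAbove hδ⟩
  rintro δ ⟨hδC, hδp⟩
  obtain ⟨q, hq, hδq⟩ := mem_iUnion₂.1 hδC
  obtain ⟨r, -, hrp, hrq⟩ := hdir p hp q hq
  exact hrp.2 ▸ ⟨hrq.snd_subset hδq, hδp⟩

lemma iUnion_fst_inter_Iio_ne (hcond : ∀ p ∈ F, IsCond κ A p)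
    (hdir : DirectedOn (swap CondLE) F) {α : Ordinal.{0}} (hα : α ∈ ⋃ p ∈ F, p.2)
    (hinacc : IsInaccOrd α) : (⋃ p ∈ F, p.1) ∩ Iio α ≠ A α := by
  obtain ⟨p, hp, hαp⟩ := mem_iUnion₂.1 hα
  have hαle : α ≤ sSup p.2 := le_csSup (hcond p hp).bddAbove hαp
  have hrestrict : (⋃ p ∈ F, p.1) ∩ Iio α = p.1 ∩ Iio α := by
    rw [← iUnion_fst_inter_Iio_eq hcond hdir hp, inter_assoc, Iio_inter_Iio,
      inf_of_le_right hαle]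
  exact hrestrict ▸ (hcond p hp).2.2 α hαp hinacc

lemma isUnboundedIn_iUnion_snd (hκ : Order.IsSuccLimit κ)
    (hmeets : ∀ γ < κ, (F ∩ DSet κ A γ).Nonempty) : IsUnboundedIn κ (⋃ p ∈ F, p.2) := by
  intro α hα
  obtain ⟨p, hp, -, β, hβp, hβ⟩ := hmeets (Order.succ α) (hκ.succ_lt hα)
  exact ⟨β, mem_biUnion hp hβp, Order.succ_le_iff.1 (not_lt.1 hβ)⟩

lemma isClosedIn_iUnion_snd (hcond : ∀ p ∈ F, IsCond κ A p)
    (hdir : DirectedOn (swap CondLE) F) (hmeets : ∀ γ < κ, (F ∩ DSet κ A γ).Nonempty) :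
    IsClosedIn κ (⋃ p ∈ F, p.2) := by
  intro α hα hα0 hlim
  obtain ⟨p, hp, -, β, hβp, hβ⟩ := hmeets α hα
  have hαle : α ≤ sSup p.2 := (not_lt.1 hβ).trans (le_csSup (hcond p hp).bddAbove hβp)
  refine mem_biUnion hp ((hcond p hp).1.2.2 α hα hα0 fun γ hγ => ?_)
  obtain ⟨δ, hδC, hγδ, hδα⟩ := hlim γ hγ
  have hδp : δ ∈ p.2 :=
    iUnion_snd_inter_Iic_eq hcond hdir hp ▸ ⟨hδC, hδα.le.trans hαle⟩
  exact ⟨δ, hδp, hγδ, hδα⟩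

lemma isClubIn_iUnion_snd (hκ : Order.IsSuccLimit κ) (hcond : ∀ p ∈ F, IsCond κ A p)
    (hdir : DirectedOn (swap CondLE) F) (hmeets : ∀ γ < κ, (F ∩ DSet κ A γ).Nonempty) :
    IsClubIn κ (⋃ p ∈ F, p.2) := by
  refine ⟨?_, isUnboundedIn_iUnion_snd hκ hmeets, isClosedIn_iUnion_snd hcond hdir hmeets⟩
  simp only [iUnion_subset_iff]
  exact fun p hp => (hcond p hp).1.1

end Filter

theorem filter_kills_sequence_general (κ : Cardinal.{0}) (hκ : κ.IsInaccessible)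
    (A : Ordinal.{0} → Set Ordinal.{0})
    (F : Set (Set Ordinal.{0} × Set Ordinal.{0}))
    (hFcond : ∀ p ∈ F, IsCond κ.ord A p)
    (hFdir : ∀ p ∈ F, ∀ q ∈ F, ∃ r ∈ F, CondLE r p ∧ CondLE r q)
    (hFmeets : ∀ γ < κ.ord, (F ∩ DSet κ.ord A γ).Nonempty) :
    ∀ S C : Set Ordinal.{0},
      S = (⋃ p ∈ F, p.1) → C = (⋃ p ∈ F, p.2) →
      IsClubIn κ.ord C ∧
      (∀ α ∈ C, IsInaccOrd α → S ∩ Set.Iio α ≠ A α) ∧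
      ¬ IsStationaryIn κ.ord
          {α | α < κ.ord ∧ IsInaccOrd α ∧ S ∩ Set.Iio α = A α} := by
  rintro S C rfl rfl
  have hkill : ∀ α ∈ ⋃ p ∈ F, p.2, IsInaccOrd α → (⋃ p ∈ F, p.1) ∩ Iio α ≠ A α :=
    fun α hα hinacc => iUnion_fst_inter_Iio_ne hFcond hFdir hα hinacc
  have hclub := isClubIn_iUnion_snd (Cardinal.isSuccLimit_ord hκ.1.le) hFcond hFdir hFmeets
  refine ⟨hclub, hkill, not_isStationaryIn_of_disjoint hclub ?_⟩
  rw [disjoint_left]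
  rintro α ⟨-, hinacc, heq⟩ hαC
  exact hkill α hαC hinacc heq

/-- For a strongly inaccessible `κ`, a potential `◊_κ` sequence `A`, and a
filter `F` on the diamond killing poset meeting every `D_γ` for `γ < κ`:
setting `S = ⋃ {s : (s,c) ∈ F}` and `C = ⋃ {c : (s,c) ∈ F}`, the set `C` is
club in `κ`, `S ∩ α ≠ A_α` for every strongly inaccessible `α ∈ C`, and in
particular `{α < κ : α strongly inaccessible, S ∩ α = A_α}` is not stationary. -/
theorem filter_kills_sequence (κ : Cardinal.{0}) (hκ : κ.IsInaccessible)
    (A : Ordinal.{0} → Set Ordinal.{0}) (hA : ∀ α < κ.ord, A α ⊆ Set.Iio α)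
    (F : Set (Set Ordinal.{0} × Set Ordinal.{0}))
    (hFcond : ∀ p ∈ F, IsCond κ.ord A p)
    (hFne : F.Nonempty)
    (hFup : ∀ p ∈ F, ∀ q, IsCond κ.ord A q → CondLE p q → q ∈ F)
    (hFdir : ∀ p ∈ F, ∀ q ∈ F, ∃ r ∈ F, CondLE r p ∧ CondLE r q)
    (hFmeets : ∀ γ < κ.ord, (F ∩ DSet κ.ord A γ).Nonempty) :
    ∀ S C : Set Ordinal.{0},
      S = (⋃ p ∈ F, p.1) → C = (⋃ p ∈ F, p.2) →
      IsClubIn κ.ord C ∧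
      (∀ α ∈ C, IsInaccOrd α → S ∩ Set.Iio α ≠ A α) ∧
      ¬ IsStationaryIn κ.ord
          {α | α < κ.ord ∧ IsInaccOrd α ∧ S ∩ Set.Iio α = A α} :=
  filter_kills_sequence_general κ hκ A F hFcond hFdir hFmeets
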